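/- arXiv:2602.14241 — 8 statements merged into one kernel-verified Lean document; each statement's English description precedes it below -/
import Mathlib

section
/- Let Δ ≥ 4 and n ≥ Δ+2 be integers, and let m : {(i,j) : 1 ≤ i ≤ j ≤ Δ} → ℝ be a family of nonnegative real numbers satisfying Σ_{1≤i≤j≤Δ} (1/i + 1/j)·m_{i,j} = n and Σ_{1≤i≤j≤Δ} m_{i,j} = n−1. Then Σ_{1≤i≤j≤Δ} (i−j)²·m_{i,j} ≤ (4Δ−6)·n + (Δ²−6Δ+3+6/Δ)·(n−1). -/
/-!
Weak LP duality: the pair `(4Δ - 6, Δ² - 6Δ + 3 + 6/Δ)` is a feasible dual solution, i.e.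
`(i - j)² ≤ (4Δ - 6)(1/i + 1/j) + Δ² - 6Δ + 3 + 6/Δ` for all `1 ≤ i ≤ j ≤ Δ`; multiplying by
`m i j ≥ 0` and summing turns the two constraints into the bound. For fixed `i` the worst case
is `j = Δ`, where the inequality reduces to `(i - 1)(i - 2)(2Δ - 3 - i) ≥ 0`.
-/

open Finset

lemma sum_sum_mul_le_of_le_add {α β : Type*} {s : Finset α} {t : α → Finset β}
    {c w m : α → β → ℝ} (A B : ℝ) (hm : ∀ i ∈ s, ∀ j ∈ t i, 0 ≤ m i j)
    (hc : ∀ i ∈ s, ∀ j ∈ t i, c i j ≤ A * w i j + B) :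
    ∑ i ∈ s, ∑ j ∈ t i, c i j * m i j
      ≤ A * ∑ i ∈ s, ∑ j ∈ t i, w i j * m i j + B * ∑ i ∈ s, ∑ j ∈ t i, m i j := by
  calc ∑ i ∈ s, ∑ j ∈ t i, c i j * m i j
      ≤ ∑ i ∈ s, ∑ j ∈ t i, (A * (w i j * m i j) + B * m i j) := by
        gcongr with i hi j hj
        calc c i j * m i j ≤ (A * w i j + B) * m i j :=
              mul_le_mul_of_nonneg_right (hc i hi j hj) (hm i hi j hj)
          _ = A * (w i j * m i j) + B * m i j := by ring
    _ = A * ∑ i ∈ s, ∑ j ∈ t i, w i j * m i j + B * ∑ i ∈ s, ∑ j ∈ t i, m i j := by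
        simp only [sum_add_distrib, mul_sum]

lemma cubic_nonneg_of_le {Δ i : ℕ} (hi : 1 ≤ i) (hiΔ : i ≤ Δ) :
    0 ≤ ((i : ℝ) - 1) * ((i : ℝ) - 2) * (2 * (Δ : ℝ) - 3 - i) := by
  rcases Nat.lt_or_ge i 3 with hi3 | hi3
  · interval_cases i <;> norm_num
  · have hi' : (3 : ℝ) ≤ i := by exact_mod_cast hi3
    have hiΔ' : (i : ℝ) ≤ Δ := by exact_mod_cast hiΔ
    exact mul_nonneg (mul_nonneg (by linarith) (by linarith)) (by linarith)

lemma sq_sub_le_dual_at_top {Δ i : ℕ} (hi : 1 ≤ i) (hiΔ : i ≤ Δ) :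
    ((Δ : ℝ) - i) ^ 2 ≤ (4 * (Δ : ℝ) - 6) / i + ((Δ : ℝ) ^ 2 - 6 * Δ + 7) := by
  have hi' : (0 : ℝ) < i := by exact_mod_cast hi
  rw [div_add' _ _ _ hi'.ne', le_div_iff₀ hi']
  nlinarith [cubic_nonneg_of_le hi hiΔ]

lemma sq_sub_le_dual {Δ i j : ℕ} (hΔ : 2 ≤ Δ) (hi : 1 ≤ i) (hij : i ≤ j) (hjΔ : j ≤ Δ) :
    ((i : ℝ) - j) ^ 2
      ≤ (4 * (Δ : ℝ) - 6) * (1 / (i : ℝ) + 1 / (j : ℝ))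
        + ((Δ : ℝ) ^ 2 - 6 * (Δ : ℝ) + 3 + 6 / (Δ : ℝ)) := by
  have hi' : (1 : ℝ) ≤ i := by exact_mod_cast hi
  have hij' : (i : ℝ) ≤ j := by exact_mod_cast hij
  have hjΔ' : (j : ℝ) ≤ Δ := by exact_mod_cast hjΔ
  have hΔ' : (2 : ℝ) ≤ Δ := by exact_mod_cast hΔ
  have hA : (0 : ℝ) ≤ 4 * Δ - 6 := by linarith
  have hj : 1 / (Δ : ℝ) ≤ 1 / j := one_div_le_one_div_of_le (by linarith) hjΔ'
  have hΔ6 : (4 * (Δ : ℝ) - 6) * (1 / Δ) + 6 / Δ = 4 := by field_simp; ring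
  calc ((i : ℝ) - j) ^ 2 ≤ ((Δ : ℝ) - i) ^ 2 := by nlinarith
    _ ≤ (4 * (Δ : ℝ) - 6) / i + ((Δ : ℝ) ^ 2 - 6 * Δ + 7) := sq_sub_le_dual_at_top hi (hij.trans hjΔ)
    _ ≤ (4 * (Δ : ℝ) - 6) * (1 / (i : ℝ) + 1 / (j : ℝ))
        + ((Δ : ℝ) ^ 2 - 6 * (Δ : ℝ) + 3 + 6 / (Δ : ℝ)) := by
      rw [← mul_one_div]
      linarith [mul_le_mul_of_nonneg_left hj hA]

theorem lp_upper_bound_general (Δ n : ℕ) (hΔ : 4 ≤ Δ)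
    (m : ℕ → ℕ → ℝ)
    (hm : ∀ i j, 1 ≤ i → i ≤ j → j ≤ Δ → 0 ≤ m i j)
    (hw : ∑ i ∈ Finset.Icc 1 Δ, ∑ j ∈ Finset.Icc i Δ,
        (1 / (i : ℝ) + 1 / (j : ℝ)) * m i j = (n : ℝ))
    (hs : ∑ i ∈ Finset.Icc 1 Δ, ∑ j ∈ Finset.Icc i Δ, m i j = (n : ℝ) - 1) :
    ∑ i ∈ Finset.Icc 1 Δ, ∑ j ∈ Finset.Icc i Δ, ((i : ℝ) - (j : ℝ)) ^ 2 * m i j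
      ≤ (4 * (Δ : ℝ) - 6) * (n : ℝ)
        + ((Δ : ℝ) ^ 2 - 6 * (Δ : ℝ) + 3 + 6 / (Δ : ℝ)) * ((n : ℝ) - 1) := by
  rw [← hs, ← hw]
  refine sum_sum_mul_le_of_le_add _ _ (fun i hi j hj => ?_) (fun i hi j hj => ?_) <;>
    rw [mem_Icc] at hi hj
  · exact hm i j hi.1 hj.1 hj.2
  · exact sq_sub_le_dual (by omega) hi.1 hj.1 hj.2

/-- Weak LP duality bound: for nonnegative `m i j` on pairs `1 ≤ i ≤ j ≤ Δ`
satisfying the two tree constraints, the σ-objective is bounded above by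
`(4Δ−6)n + (Δ²−6Δ+3+6/Δ)(n−1)`. -/
theorem lp_upper_bound (Δ n : ℕ) (hΔ : 4 ≤ Δ) (hn : Δ + 2 ≤ n)
    (m : ℕ → ℕ → ℝ)
    (hm : ∀ i j, 1 ≤ i → i ≤ j → j ≤ Δ → 0 ≤ m i j)
    (hw : ∑ i ∈ Finset.Icc 1 Δ, ∑ j ∈ Finset.Icc i Δ,
        (1 / (i : ℝ) + 1 / (j : ℝ)) * m i j = (n : ℝ))
    (hs : ∑ i ∈ Finset.Icc 1 Δ, ∑ j ∈ Finset.Icc i Δ, m i j = (n : ℝ) - 1) :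
    ∑ i ∈ Finset.Icc 1 Δ, ∑ j ∈ Finset.Icc i Δ, ((i : ℝ) - (j : ℝ)) ^ 2 * m i j
      ≤ (4 * (Δ : ℝ) - 6) * (n : ℝ)
        + ((Δ : ℝ) ^ 2 - 6 * (Δ : ℝ) + 3 + 6 / (Δ : ℝ)) * ((n : ℝ) - 1) :=
  lp_upper_bound_general Δ n hΔ m hm hw hs
end

section
/- Let Δ ≥ 4 and n ≥ Δ+2 be integers, and let m : {(i,j) : 1 ≤ i ≤ j ≤ Δ} → ℝ be a family of nonnegative real numbers satisfying Σ_{1≤i≤j≤Δ} (1/i + 1/j)·m_{i,j} = n and Σ_{1≤i≤j≤Δ} m_{i,j} = n−1. Then Σ_{1≤i≤j≤Δ} (i−j)²·m_{i,j} = (4Δ−6)·n + (Δ²−6Δ+3+6/Δ)·(n−1) holds if and only if m_{1,Δ} = ((Δ−2)n + (Δ+2))/Δ, m_{2,Δ} = 2(n−Δ−1)/Δ, and m_{i,j} = 0 for all (i,j) ∉ {(1,Δ),(2,Δ)}. -/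
open Finset

/-- If `f` vanishes on all admissible pairs except `(1,Δ)` and `(2,Δ)`, the double
sum collapses to the two special terms. -/
lemma lp_sum_reduce (Δ : ℕ) (hΔ : 4 ≤ Δ) (f : ℕ → ℕ → ℝ)
    (hf : ∀ i j, 1 ≤ i → i ≤ j → j ≤ Δ →
      ¬((i = 1 ∧ j = Δ) ∨ (i = 2 ∧ j = Δ)) → f i j = 0) :
    ∑ i ∈ Finset.Icc 1 Δ, ∑ j ∈ Finset.Icc i Δ, f i j = f 1 Δ + f 2 Δ := by
  have h12 : ({1, 2} : Finset ℕ) ⊆ Finset.Icc 1 Δ := by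
    intro x hx
    simp only [Finset.mem_insert, Finset.mem_singleton] at hx
    simp only [Finset.mem_Icc]
    omega
  rw [← Finset.sum_subset h12 ?_]
  · rw [Finset.sum_pair (by norm_num : (1:ℕ) ≠ 2)]
    have h1 : ∑ j ∈ Finset.Icc 1 Δ, f 1 j = f 1 Δ := by
      apply Finset.sum_eq_single_of_mem Δ (by simp [Finset.mem_Icc]; omega)
      intro j hj hne
      simp only [Finset.mem_Icc] at hj
      exact hf 1 j le_rfl hj.1 hj.2 (by omega)
    have h2 : ∑ j ∈ Finset.Icc 2 Δ, f 2 j = f 2 Δ := by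
      apply Finset.sum_eq_single_of_mem Δ (by simp [Finset.mem_Icc]; omega)
      intro j hj hne
      simp only [Finset.mem_Icc] at hj
      exact hf 2 j (by omega) hj.1 hj.2 (by omega)
    rw [h1, h2]
  · intro i hi hni
    simp only [Finset.mem_Icc] at hi
    simp only [Finset.mem_insert, Finset.mem_singleton] at hni
    apply Finset.sum_eq_zero
    intro j hj
    simp only [Finset.mem_Icc] at hj
    exact hf i j hi.1 hj.1 hj.2 (by omega)

/-- Strict positivity of the dual slack away from `(1,Δ)` and `(2,Δ)`. -/
lemma lp_slack_pos (Δ i j : ℕ) (hΔ : 4 ≤ Δ) (h1 : 1 ≤ i) (hij : i ≤ j) (hj : j ≤ Δ)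
    (hne : ¬((i = 1 ∧ j = Δ) ∨ (i = 2 ∧ j = Δ))) :
    0 < (4 * (Δ:ℝ) - 6) * (1 / (i:ℝ) + 1 / (j:ℝ))
        + ((Δ:ℝ) ^ 2 - 6 * (Δ:ℝ) + 3 + 6 / (Δ:ℝ)) - ((i:ℝ) - (j:ℝ)) ^ 2 := by
  have ha : (1:ℝ) ≤ (i:ℝ) := by exact_mod_cast h1
  have hab : (i:ℝ) ≤ (j:ℝ) := by exact_mod_cast hij
  have hbD : (j:ℝ) ≤ (Δ:ℝ) := by exact_mod_cast hj
  have hD : (4:ℝ) ≤ (Δ:ℝ) := by exact_mod_cast hΔ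
  have ha0 : (0:ℝ) < (i:ℝ) := by linarith
  have hb0 : (0:ℝ) < (j:ℝ) := by linarith
  have hD0 : (0:ℝ) < (Δ:ℝ) := by linarith
  rcases eq_or_lt_of_le hj with hjD | hjlt
  · -- j = Δ, so i ≥ 3
    have hi3 : 3 ≤ i := by omega
    have ha3 : (3:ℝ) ≤ (i:ℝ) := by exact_mod_cast hi3
    subst hjD
    have key : (4 * ((j:ℕ):ℝ) - 6) * (1 / (i:ℝ) + 1 / ((j:ℕ):ℝ))
        + (((j:ℕ):ℝ) ^ 2 - 6 * ((j:ℕ):ℝ) + 3 + 6 / ((j:ℕ):ℝ)) - ((i:ℝ) - ((j:ℕ):ℝ)) ^ 2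
        = (((i:ℝ) - 1) * ((i:ℝ) - 2) * (2 * ((j:ℕ):ℝ) - 3 - (i:ℝ))) / (i:ℝ) := by
      field_simp
      ring
    rw [key]
    apply div_pos _ ha0
    apply mul_pos (mul_pos (by linarith) (by linarith))
    linarith
  · -- j ≤ Δ - 1
    have hb1 : (j:ℝ) + 1 ≤ (Δ:ℝ) := by exact_mod_cast hjlt
    rcases le_or_gt ((j:ℝ) - (i:ℝ)) ((Δ:ℝ) - 3) with ht | ht
    · -- spread at most Δ - 3
      have e1 : (4 * (Δ:ℝ) - 6) * (1 / ((Δ:ℝ) - 1)) ≤ (4 * (Δ:ℝ) - 6) * (1 / (i:ℝ)) := by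
        apply mul_le_mul_of_nonneg_left _ (by linarith)
        apply one_div_le_one_div_of_le ha0 (by linarith)
      have e2 : (4 * (Δ:ℝ) - 6) * (1 / ((Δ:ℝ) - 1)) ≤ (4 * (Δ:ℝ) - 6) * (1 / (j:ℝ)) := by
        apply mul_le_mul_of_nonneg_left _ (by linarith)
        apply one_div_le_one_div_of_le hb0 (by linarith)
      have e3 : ((i:ℝ) - (j:ℝ)) ^ 2 ≤ ((Δ:ℝ) - 3) ^ 2 := by nlinarith
      have e4 : (6:ℝ) - 6 / (Δ:ℝ) < 2 * ((4 * (Δ:ℝ) - 6) * (1 / ((Δ:ℝ) - 1))) := by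
        rw [mul_one_div]
        rw [show (2:ℝ) * ((4 * (Δ:ℝ) - 6) / ((Δ:ℝ) - 1)) = (8 * (Δ:ℝ) - 12) / ((Δ:ℝ) - 1) by ring]
        have h6 : (0:ℝ) < 6 / (Δ:ℝ) := by positivity
        have : (6:ℝ) < (8 * (Δ:ℝ) - 12) / ((Δ:ℝ) - 1) := by
          rw [lt_div_iff₀ (by linarith)]
          linarith
        linarith
      nlinarith [e1, e2, e3, e4]
    · -- spread more than Δ - 3, so i ≤ 2
      have ha2 : (i:ℝ) ≤ 2 := by linarith
      have e1 : (4 * (Δ:ℝ) - 6) * (4 / 3 - 4 * (i:ℝ) / 9) ≤ (4 * (Δ:ℝ) - 6) * (1 / (i:ℝ)) := by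
        apply mul_le_mul_of_nonneg_left _ (by linarith)
        rw [le_div_iff₀ ha0]
        nlinarith [sq_nonneg (2 * (i:ℝ) - 3)]
      have e2 : (10:ℝ) / 3 ≤ (4 * (Δ:ℝ) - 6) * (1 / (j:ℝ)) := by
        rw [mul_one_div, le_div_iff₀ hb0]
        linarith
      have e3 : (0:ℝ) < 6 / (Δ:ℝ) := by positivity
      nlinarith [e1, e2, e3, mul_nonneg (by linarith : (0:ℝ) ≤ (i:ℝ) - 1)
        (by linarith : (0:ℝ) ≤ 2 - (i:ℝ))]

/-- Nonnegativity of the dual slack on all admissible pairs. -/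
lemma lp_slack_nonneg (Δ i j : ℕ) (hΔ : 4 ≤ Δ) (h1 : 1 ≤ i) (hij : i ≤ j) (hj : j ≤ Δ) :
    0 ≤ (4 * (Δ:ℝ) - 6) * (1 / (i:ℝ) + 1 / (j:ℝ))
        + ((Δ:ℝ) ^ 2 - 6 * (Δ:ℝ) + 3 + 6 / (Δ:ℝ)) - ((i:ℝ) - (j:ℝ)) ^ 2 := by
  have hD0 : ((Δ:ℝ)) ≠ 0 := Nat.cast_ne_zero.mpr (by omega)
  by_cases hne : ((i = 1 ∧ j = Δ) ∨ (i = 2 ∧ j = Δ))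
  · rcases hne with ⟨hi, hj'⟩ | ⟨hi, hj'⟩ <;> subst hi <;> subst hj' <;>
      refine le_of_eq (Eq.symm ?_) <;> push_cast <;> field_simp <;> ring
  · exact (lp_slack_pos Δ i j hΔ h1 hij hj hne).le

/-- Characterization of equality in the LP bound: the objective attains the
value `(4Δ−6)n + (Δ²−6Δ+3+6/Δ)(n−1)` if and only if the solution is the unique
optimal one supported on `(1,Δ)` and `(2,Δ)`. -/
theorem lp_equality_iff (Δ n : ℕ) (hΔ : 4 ≤ Δ) (hn : Δ + 2 ≤ n)
    (m : ℕ → ℕ → ℝ)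
    (hm : ∀ i j, 1 ≤ i → i ≤ j → j ≤ Δ → 0 ≤ m i j)
    (hw : ∑ i ∈ Finset.Icc 1 Δ, ∑ j ∈ Finset.Icc i Δ,
        (1 / (i : ℝ) + 1 / (j : ℝ)) * m i j = (n : ℝ))
    (hs : ∑ i ∈ Finset.Icc 1 Δ, ∑ j ∈ Finset.Icc i Δ, m i j = (n : ℝ) - 1) :
    (∑ i ∈ Finset.Icc 1 Δ, ∑ j ∈ Finset.Icc i Δ, ((i : ℝ) - (j : ℝ)) ^ 2 * m i j
        = (4 * (Δ : ℝ) - 6) * (n : ℝ)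
          + ((Δ : ℝ) ^ 2 - 6 * (Δ : ℝ) + 3 + 6 / (Δ : ℝ)) * ((n : ℝ) - 1))
      ↔ (m 1 Δ = (((Δ : ℝ) - 2) * (n : ℝ) + ((Δ : ℝ) + 2)) / (Δ : ℝ)
          ∧ m 2 Δ = 2 * ((n : ℝ) - (Δ : ℝ) - 1) / (Δ : ℝ)
          ∧ ∀ i j, 1 ≤ i → i ≤ j → j ≤ Δ →
              ¬((i = 1 ∧ j = Δ) ∨ (i = 2 ∧ j = Δ)) → m i j = 0) := by
  have hD0 : (0:ℝ) < (Δ:ℝ) := by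
    have : (4:ℝ) ≤ (Δ:ℝ) := by exact_mod_cast hΔ
    linarith
  have hDne : ((Δ:ℝ)) ≠ 0 := ne_of_gt hD0
  set D : ℝ := (Δ:ℝ) with hDdef
  set s : ℕ → ℕ → ℝ := fun i j =>
    (4 * D - 6) * (1 / (i:ℝ) + 1 / (j:ℝ)) + (D ^ 2 - 6 * D + 3 + 6 / D)
      - ((i:ℝ) - (j:ℝ)) ^ 2 with hsdef
  constructor
  · -- forward direction
    intro hobj
    have hsum : ∑ i ∈ Finset.Icc 1 Δ, ∑ j ∈ Finset.Icc i Δ, s i j * m i j = 0 := by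
      have e1 : ∀ i ∈ Finset.Icc 1 Δ, ∑ j ∈ Finset.Icc i Δ, s i j * m i j
          = (4 * D - 6) * (∑ j ∈ Finset.Icc i Δ, (1 / (i:ℝ) + 1 / (j:ℝ)) * m i j)
            + (D ^ 2 - 6 * D + 3 + 6 / D) * (∑ j ∈ Finset.Icc i Δ, m i j)
            - ∑ j ∈ Finset.Icc i Δ, ((i:ℝ) - (j:ℝ)) ^ 2 * m i j := by
        intro i _
        rw [Finset.mul_sum, Finset.mul_sum, ← Finset.sum_add_distrib, ← Finset.sum_sub_distrib]
        exact Finset.sum_congr rfl fun j _ => by simp only [hsdef]; ring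
      rw [Finset.sum_congr rfl e1, Finset.sum_sub_distrib, Finset.sum_add_distrib,
        ← Finset.mul_sum, ← Finset.mul_sum, hw, hs, hobj]
      ring
    have hnn : ∀ i ∈ Finset.Icc 1 Δ, ∀ j ∈ Finset.Icc i Δ, 0 ≤ s i j * m i j := by
      intro i hi j hj
      simp only [Finset.mem_Icc] at hi hj
      exact mul_nonneg (lp_slack_nonneg Δ i j hΔ hi.1 hj.1 hj.2)
        (hm i j hi.1 hj.1 hj.2)
    have hterm : ∀ i ∈ Finset.Icc 1 Δ, ∀ j ∈ Finset.Icc i Δ, s i j * m i j = 0 := by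
      have houter := (Finset.sum_eq_zero_iff_of_nonneg
        (fun i hi => Finset.sum_nonneg (hnn i hi))).mp hsum
      intro i hi j hj
      exact (Finset.sum_eq_zero_iff_of_nonneg (hnn i hi)).mp (houter i hi) j hj
    have hzero : ∀ i j, 1 ≤ i → i ≤ j → j ≤ Δ →
        ¬((i = 1 ∧ j = Δ) ∨ (i = 2 ∧ j = Δ)) → m i j = 0 := by
      intro i j h1 hij hj hne
      have hp := lp_slack_pos Δ i j hΔ h1 hij hj hne
      have ht := hterm i (Finset.mem_Icc.mpr ⟨h1, le_trans hij hj⟩)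
        j (Finset.mem_Icc.mpr ⟨hij, hj⟩)
      rcases mul_eq_zero.mp ht with h | h
      · exact absurd h (ne_of_gt hp)
      · exact h
    refine ⟨?_, ?_, hzero⟩ <;>
    · have E1 := (lp_sum_reduce Δ hΔ (fun i j => (1 / (i:ℝ) + 1 / (j:ℝ)) * m i j)
        (fun i j h1 hij hj hne => by rw [hzero i j h1 hij hj hne, mul_zero])).symm.trans hw
      have E2 := (lp_sum_reduce Δ hΔ (fun i j => m i j)
        (fun i j h1 hij hj hne => hzero i j h1 hij hj hne)).symm.trans hs
      push_cast at E1
      rw [eq_div_iff hDne]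
      have hinv : D * (1 / D) = 1 := mul_one_div_cancel hDne
      first
      | linear_combination (2 * D) * E1 - (D + 2) * E2
          - (2 * m 1 Δ + 2 * m 2 Δ) * hinv
      | linear_combination (-2 * D) * E1 + (2 * D + 2) * E2
          + (2 * m 1 Δ + 2 * m 2 Δ) * hinv
  · -- reverse direction
    rintro ⟨h1, h2, h0⟩
    have E := lp_sum_reduce Δ hΔ (fun i j => ((i:ℝ) - (j:ℝ)) ^ 2 * m i j)
      (fun i j hi hij hj hne => by rw [h0 i j hi hij hj hne, mul_zero])
    rw [E]
    push_cast
    rw [h1, h2]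
    field_simp
    ring
end

section
/- Let Δ ≥ 4 be an integer and define F(i,j) = (4Δ−6)(1/i + 1/j) + Δ² − 6Δ + 3 + 6/Δ − (i−j)² for integers 1 ≤ i ≤ j ≤ Δ. Then F(i,j) ≥ 0 for all 1 ≤ i ≤ j ≤ Δ, and F(i,j) = 0 if and only if (i,j) = (1,Δ) or (i,j) = (2,Δ). -/
/-- The dual slack function. -/
noncomputable def F (Δ i j : ℕ) : ℝ :=
  (4 * (Δ : ℝ) - 6) * (1 / (i : ℝ) + 1 / (j : ℝ))
    + (Δ : ℝ) ^ 2 - 6 * (Δ : ℝ) + 3 + 6 / (Δ : ℝ) - ((i : ℝ) - (j : ℝ)) ^ 2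

/-!
Splitting off the value at `j = Δ`, `F(i,j) = F(i,Δ) + (4Δ-6)(1/j - 1/Δ) + (Δ-j)(Δ+j-2i)`, and the
extra terms are positive as soon as `j < Δ`. On the line `j = Δ` the cubic `i F(i,Δ)` vanishes at
`i = 1` and `i = 2`, which gives `F(i,Δ) = (i-1)(i-2)(2Δ-3-i)/i`; for integers `1 ≤ i ≤ Δ` and
`Δ ≥ 4` the first two factors have a nonnegative product, zero only at `i ∈ {1,2}`, and the third
factor is positive.
-/

lemma F_sub_F_self_right {Δ j : ℕ} (i : ℕ) (hj : j ≠ 0) (hΔ : Δ ≠ 0) :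
    F Δ i j - F Δ i Δ =
      (4 * (Δ : ℝ) - 6) * (1 / j - 1 / Δ) + ((Δ : ℝ) - j) * (Δ + j - 2 * i) := by
  unfold F
  field_simp
  ring

lemma F_self_right {Δ i : ℕ} (hi : i ≠ 0) (hΔ : Δ ≠ 0) :
    F Δ i Δ = ((i : ℝ) - 1) * ((i : ℝ) - 2) * (2 * Δ - 3 - i) / i := by
  unfold F
  field_simp
  ring

lemma F_one_self_right {Δ : ℕ} (hΔ : Δ ≠ 0) : F Δ 1 Δ = 0 := by
  simp [F_self_right one_ne_zero hΔ]

lemma F_two_self_right {Δ : ℕ} (hΔ : Δ ≠ 0) : F Δ 2 Δ = 0 := by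
  rw [F_self_right two_ne_zero hΔ]
  norm_num

lemma natCast_sub_one_mul_natCast_sub_two_nonneg (i : ℕ) : 0 ≤ ((i : ℝ) - 1) * ((i : ℝ) - 2) := by
  rcases le_or_gt i 1 with hi | hi
  · have hi' : (i : ℝ) ≤ 1 := by exact_mod_cast hi
    exact mul_nonneg_of_nonpos_of_nonpos (by linarith) (by linarith)
  · have hi' : (2 : ℝ) ≤ i := by exact_mod_cast hi
    exact mul_nonneg (by linarith) (by linarith)

lemma F_self_right_nonneg {Δ i : ℕ} (hi : i ≠ 0) (hiΔ : i + 3 ≤ 2 * Δ) : 0 ≤ F Δ i Δ := by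
  have hiΔ' : (i : ℝ) + 3 ≤ 2 * Δ := by exact_mod_cast hiΔ
  rw [F_self_right hi (by omega)]
  exact div_nonneg
    (mul_nonneg (natCast_sub_one_mul_natCast_sub_two_nonneg i) (by linarith)) i.cast_nonneg

lemma F_self_right_pos {Δ i : ℕ} (hi : 3 ≤ i) (hiΔ : i + 3 < 2 * Δ) : 0 < F Δ i Δ := by
  have hi' : (3 : ℝ) ≤ i := by exact_mod_cast hi
  have hiΔ' : (i : ℝ) + 3 < 2 * Δ := by exact_mod_cast hiΔ
  rw [F_self_right (by omega) (by omega)]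
  exact div_pos (mul_pos (mul_pos (by linarith) (by linarith)) (by linarith)) (by linarith)

lemma F_self_right_lt_F {Δ i j : ℕ} (hj : j ≠ 0) (hij : i ≤ j) (hjΔ : j < Δ) :
    F Δ i Δ < F Δ i j := by
  have hj' : (1 : ℝ) ≤ j := by exact_mod_cast Nat.one_le_iff_ne_zero.mpr hj
  have hij' : (i : ℝ) ≤ j := by exact_mod_cast hij
  have hjΔ' : (j : ℝ) + 1 ≤ Δ := by exact_mod_cast hjΔ
  have hinv : 1 / (Δ : ℝ) < 1 / j := one_div_lt_one_div_of_lt (by linarith) (by linarith)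
  rw [← sub_pos, F_sub_F_self_right i hj (by omega)]
  exact add_pos (mul_pos (by linarith) (by linarith)) (mul_pos (by linarith) (by linarith))

/-- Dual feasibility: `F(i,j) ≥ 0` for all `1 ≤ i ≤ j ≤ Δ`, with equality
exactly for `(1,Δ)` and `(2,Δ)`. -/
theorem F_nonneg_and_eq_zero_iff (Δ : ℕ) (hΔ : 4 ≤ Δ)
    (i j : ℕ) (hi : 1 ≤ i) (hij : i ≤ j) (hj : j ≤ Δ) :
    0 ≤ F Δ i j ∧ (F Δ i j = 0 ↔ (i = 1 ∧ j = Δ) ∨ (i = 2 ∧ j = Δ)) := by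
  rcases hj.lt_or_eq with hjΔ | rfl
  · have hpos : 0 < F Δ i j :=
      (F_self_right_nonneg (by omega) (by omega)).trans_lt (F_self_right_lt_F (by omega) hij hjΔ)
    exact ⟨hpos.le, iff_of_false hpos.ne' (by omega)⟩
  · obtain rfl | rfl | hi3 : i = 1 ∨ i = 2 ∨ 3 ≤ i := by omega
    · simp [F_one_self_right (by omega : j ≠ 0)]
    · simp [F_two_self_right (by omega : j ≠ 0)]
    · have hpos := F_self_right_pos (Δ := j) hi3 (by omega)
      exact ⟨hpos.le, iff_of_false hpos.ne' (by omega)⟩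
end

section
/- Let Δ ≥ 4 be an integer and define F(i,j) = (4Δ−6)(1/i + 1/j) + Δ² − 6Δ + 3 + 6/Δ − (i−j)². Then for all integers 3 ≤ i ≤ j ≤ Δ one has F(i,j) ≥ 2 − 6/Δ > 0. -/
lemma two_div_le_one_div_add_one_div {x y D : ℝ} (hx : 0 < x) (hy : 0 < y)
    (hxD : x ≤ D) (hyD : y ≤ D) : 2 / D ≤ 1 / x + 1 / y := by
  calc 2 / D = 1 / D + 1 / D := by ring
    _ ≤ 1 / x + 1 / y :=
      add_le_add (one_div_le_one_div_of_le hx hxD) (one_div_le_one_div_of_le hy hyD)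

lemma sq_sub_le_sq_sub_of_mem_Icc {x y a b : ℝ} (hx : x ∈ Set.Icc a b)
    (hy : y ∈ Set.Icc a b) :
    (x - y) ^ 2 ≤ (b - a) ^ 2 := by
  obtain ⟨hax, hxb⟩ := hx
  obtain ⟨hay, hyb⟩ := hy
  exact sq_le_sq' (by linarith) (by linarith)

lemma two_sub_six_div_le_slack {x y D : ℝ} (hx : x ∈ Set.Icc 3 D) (hy : y ∈ Set.Icc 3 D) :
    2 - 6 / D ≤
      (4 * D - 6) * (1 / x + 1 / y) + D ^ 2 - 6 * D + 3 + 6 / D - (x - y) ^ 2 := by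
  have hD : 3 ≤ D := hx.1.trans hx.2
  have hrecip : 2 / D ≤ 1 / x + 1 / y :=
    two_div_le_one_div_add_one_div (three_pos.trans_le hx.1) (three_pos.trans_le hy.1) hx.2 hy.2
  have hgap : (x - y) ^ 2 ≤ (D - 3) ^ 2 := sq_sub_le_sq_sub_of_mem_Icc hx hy
  calc 2 - 6 / D = (4 * D - 6) * (2 / D) + D ^ 2 - 6 * D + 3 + 6 / D - (D - 3) ^ 2 := by
        field_simp
        ring
    _ ≤ (4 * D - 6) * (1 / x + 1 / y) + D ^ 2 - 6 * D + 3 + 6 / D - (x - y) ^ 2 := by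
        gcongr
        linarith

lemma two_sub_six_div_pos {D : ℝ} (hD : 3 < D) : 0 < 2 - 6 / D := by
  have : 6 / D < 2 := (div_lt_iff₀ (by linarith)).2 (by linarith)
  linarith

/-- For `3 ≤ i ≤ j ≤ Δ` one has `F(i,j) ≥ 2 − 6/Δ > 0`. -/
theorem F_ge_of_three_le (Δ : ℕ) (hΔ : 4 ≤ Δ) (i j : ℕ)
    (hi : 3 ≤ i) (hij : i ≤ j) (hj : j ≤ Δ) :
    2 - 6 / (Δ : ℝ) ≤ F Δ i j ∧ 0 < 2 - 6 / (Δ : ℝ) := by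
  have hi' : (i : ℝ) ∈ Set.Icc (3 : ℝ) Δ :=
    ⟨by exact_mod_cast hi, by exact_mod_cast hij.trans hj⟩
  have hj' : (j : ℝ) ∈ Set.Icc (3 : ℝ) Δ :=
    ⟨by exact_mod_cast hi.trans hij, by exact_mod_cast hj⟩
  exact ⟨two_sub_six_div_le_slack hi' hj', two_sub_six_div_pos (by exact_mod_cast hΔ)⟩
end

section
/- Let Δ ≥ 4 and n ≥ Δ+2 be integers, and let T be a tree on n vertices with maximum degree at most Δ. Then σ(T) = Σ_{uv ∈ E(T)} (d(u) − d(v))² satisfies σ(T) ≤ (4Δ−6)·n + (Δ²−6Δ+3+6/Δ)·(n−1). -/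
open Finset

/-- Generalized handshake: summing `F u + F v` over edges equals `∑ v, deg v • F v`. -/
lemma sum_lift_add_eq {V : Type*} [Fintype V] [DecidableEq V] (G : SimpleGraph V)
    [DecidableRel G.Adj] (F : V → ℝ) :
    ∑ e ∈ G.edgeFinset, Sym2.lift ⟨fun u v => F u + F v, fun a b => add_comm _ _⟩ e
      = ∑ v, (G.degree v : ℝ) * F v := by
  have h1 : ∑ e ∈ G.edgeFinset, ∑ d ∈ univ.filter (fun d : G.Dart => d.edge = e), F d.fst
      = ∑ d : G.Dart, F d.fst :=
    Finset.sum_fiberwise_of_maps_to (fun d _ => by simpa using d.edge_mem) _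
  have h2 : ∑ v : V, ∑ d ∈ univ.filter (fun d : G.Dart => d.fst = v), F d.fst
      = ∑ d : G.Dart, F d.fst :=
    Finset.sum_fiberwise_of_maps_to (fun d _ => mem_univ _) _
  have e1 : ∑ e ∈ G.edgeFinset, Sym2.lift ⟨fun u v => F u + F v, fun a b => add_comm _ _⟩ e
      = ∑ e ∈ G.edgeFinset, ∑ d ∈ univ.filter (fun d : G.Dart => d.edge = e), F d.fst := by
    refine Finset.sum_congr rfl ?_
    intro e he
    induction e with
    | _ u v =>
      rw [SimpleGraph.mem_edgeFinset] at he
      have hadj : G.Adj u v := he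
      set d0 : G.Dart := ⟨(u, v), hadj⟩ with hd0
      have hfib : (univ.filter fun d : G.Dart => d.edge = s(u, v)) = {d0, d0.symm} := by
        have := SimpleGraph.Dart.edge_fiber d0
        exact this
      rw [hfib, Finset.sum_pair (d0.symm_ne.symm)]
      simp [SimpleGraph.Dart.symm, d0]
  have e2 : ∑ v : V, ∑ d ∈ univ.filter (fun d : G.Dart => d.fst = v), F d.fst
      = ∑ v, (G.degree v : ℝ) * F v := by
    refine Finset.sum_congr rfl ?_
    intro v _
    have hconst : ∑ d ∈ univ.filter (fun d : G.Dart => d.fst = v), F d.fst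
        = ∑ _d ∈ univ.filter (fun d : G.Dart => d.fst = v), F v := by
      refine Finset.sum_congr rfl ?_
      intro d hd
      rw [Finset.mem_filter] at hd
      rw [hd.2]
    rw [hconst, Finset.sum_const, nsmul_eq_mul]
    congr 1
    exact_mod_cast G.dart_fst_fiber_card_eq_degree v
  rw [e1, h1, ← h2, e2]


lemma real_case1 (D x : ℝ) (hD : 4 ≤ D) (hx1 : 1 ≤ x) (hxD : x ≤ D) :
    (x - 1) ^ 2 ≤ (D ^ 2 - 6 * D + 3 + 6 / D) + (4 * D - 6) * (1 / x + 1 / 1) := by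
  have hxpos : (0 : ℝ) < x := by linarith
  have hDpos : (0 : ℝ) < D := by linarith
  have hcert : (0 : ℝ) ≤ (D - x) * (D * x ^ 2 + (D ^ 2 - 2 * D) * x + (4 * D - 6)) := by
    apply mul_nonneg (by linarith)
    nlinarith [sq_nonneg x, mul_pos hDpos hxpos]
  have hiden : (D ^ 2 - 6 * D + 3 + 6 / D) + (4 * D - 6) * (1 / x + 1 / 1) - (x - 1) ^ 2
      = (D - x) * (D * x ^ 2 + (D ^ 2 - 2 * D) * x + (4 * D - 6)) / (D * x) := by
    field_simp
    ring
  have hdenpos : (0 : ℝ) < D * x := by positivity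
  have h := div_nonneg hcert (le_of_lt hdenpos)
  rw [← hiden] at h
  linarith

lemma real_case2 (D x y : ℝ) (hD : 4 ≤ D) (hy2 : 2 ≤ y) (hyx : y ≤ x) (hxD : x ≤ D) :
    (x - y) ^ 2 ≤ (D ^ 2 - 6 * D + 3 + 6 / D) + (4 * D - 6) * (1 / x + 1 / y) := by
  have hxpos : (0 : ℝ) < x := by linarith
  have hypos : (0 : ℝ) < y := by linarith
  have hDpos : (0 : ℝ) < D := by linarith
  have step1 : (x - y) ^ 2 ≤ (D - y) ^ 2 := by nlinarith
  have hcert : (0 : ℝ) ≤ (y - 2) * (y - 1) * (2 * D - 3 - y) := by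
    apply mul_nonneg (mul_nonneg (by linarith) (by linarith))
    linarith
  have hiden : (D ^ 2 - 6 * D + 7) + (4 * D - 6) * (1 / y) - (D - y) ^ 2
      = (y - 2) * (y - 1) * (2 * D - 3 - y) / y := by
    field_simp
    ring
  have step2 : (D - y) ^ 2 ≤ (D ^ 2 - 6 * D + 7) + (4 * D - 6) * (1 / y) := by
    have h := div_nonneg hcert (le_of_lt hypos)
    rw [← hiden] at h
    linarith
  have step3 : (4 * D - 6) * (1 / D) ≤ (4 * D - 6) * (1 / x) := by
    apply mul_le_mul_of_nonneg_left _ (by linarith)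
    rw [div_le_div_iff₀ hDpos hxpos]
    linarith
  have hsplit : (D ^ 2 - 6 * D + 7) = (D ^ 2 - 6 * D + 3 + 6 / D) + (4 * D - 6) * (1 / D) := by
    field_simp
    ring
  rw [hsplit] at step2
  calc (x - y) ^ 2 ≤ (D - y) ^ 2 := step1
    _ ≤ (D ^ 2 - 6 * D + 3 + 6 / D) + (4 * D - 6) * (1 / D) + (4 * D - 6) * (1 / y) := step2
    _ ≤ (D ^ 2 - 6 * D + 3 + 6 / D) + (4 * D - 6) * (1 / x + 1 / y) := by linarith

/-- The key numeric inequality, integer degrees `1 ≤ a,b ≤ Δ`. -/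
lemma key_ineq (Δ a b : ℕ) (hΔ : 4 ≤ Δ) (ha1 : 1 ≤ a) (haΔ : a ≤ Δ)
    (hb1 : 1 ≤ b) (hbΔ : b ≤ Δ) :
    ((a : ℝ) - (b : ℝ)) ^ 2
      ≤ ((Δ : ℝ) ^ 2 - 6 * Δ + 3 + 6 / Δ) + (4 * (Δ : ℝ) - 6) * (1 / a + 1 / b) := by
  wlog hba : b ≤ a generalizing a b
  · have h := this b a hb1 hbΔ ha1 haΔ (le_of_not_ge hba)
    calc ((a : ℝ) - b) ^ 2 = ((b : ℝ) - a) ^ 2 := by ring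
      _ ≤ _ := by linarith [h]
  have hD : (4 : ℝ) ≤ (Δ : ℝ) := by exact_mod_cast hΔ
  have hxD : (a : ℝ) ≤ (Δ : ℝ) := by exact_mod_cast haΔ
  have hyx : (b : ℝ) ≤ (a : ℝ) := by exact_mod_cast hba
  rcases Nat.lt_or_ge b 2 with hb2 | hb2
  · have hb1' : b = 1 := by omega
    subst hb1'
    have h := real_case1 (Δ : ℝ) (a : ℝ) hD (by exact_mod_cast ha1) hxD
    simpa using h
  · exact real_case2 (Δ : ℝ) (a : ℝ) (b : ℝ) hD (by exact_mod_cast hb2) hyx hxD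

/-- Sharp upper bound on the σ-irregularity of a tree of order `n ≥ Δ+2`
with maximum degree at most `Δ`. -/
theorem sigma_le_of_tree {V : Type*} [Fintype V] [DecidableEq V]
    (G : SimpleGraph V) [DecidableRel G.Adj] (hT : G.IsTree)
    (Δ n : ℕ) (hΔ : 4 ≤ Δ) (hn : Δ + 2 ≤ n) (hcard : Fintype.card V = n)
    (hmax : ∀ v, G.degree v ≤ Δ) :
    ∑ e ∈ G.edgeFinset,
        Sym2.lift ⟨fun u v => ((G.degree u : ℝ) - (G.degree v : ℝ)) ^ 2,
          by intro a b; ring⟩ e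
      ≤ (4 * (Δ : ℝ) - 6) * (n : ℝ)
        + ((Δ : ℝ) ^ 2 - 6 * (Δ : ℝ) + 3 + 6 / (Δ : ℝ)) * ((n : ℝ) - 1) := by
  classical
  have hn2 : 2 ≤ n := by omega
  have hcard2 : 1 < Fintype.card V := by omega
  -- every vertex has positive degree
  have hdeg1 : ∀ v : V, 1 ≤ G.degree v := by
    intro v
    obtain ⟨w, hw⟩ := Fintype.exists_ne_of_one_lt_card hcard2 v
    obtain ⟨p⟩ := hT.isConnected.preconnected v w
    have hnn : ¬ p.Nil := SimpleGraph.Walk.not_nil_of_ne (Ne.symm hw)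
    rw [SimpleGraph.Walk.not_nil_iff] at hnn
    obtain ⟨u, hadj, -, -⟩ := hnn
    rw [Nat.one_le_iff_ne_zero, ← Nat.pos_iff_ne_zero, G.degree_pos_iff_exists_adj]
    exact ⟨u, hadj⟩
  set F : V → ℝ := fun v => ((Δ : ℝ) ^ 2 - 6 * Δ + 3 + 6 / Δ) / 2
      + (4 * (Δ : ℝ) - 6) * (1 / (G.degree v : ℝ)) with hF
  -- per-edge bound
  have hedge : ∀ e ∈ G.edgeFinset,
      Sym2.lift ⟨fun u v => ((G.degree u : ℝ) - (G.degree v : ℝ)) ^ 2,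
        by intro a b; ring⟩ e
      ≤ Sym2.lift ⟨fun u v => F u + F v, fun a b => add_comm _ _⟩ e := by
    intro e he
    induction e with
    | _ u v =>
      rw [SimpleGraph.mem_edgeFinset] at he
      simp only [Sym2.lift_mk]
      have h := key_ineq Δ (G.degree u) (G.degree v) hΔ (hdeg1 u) (hmax u)
        (hdeg1 v) (hmax v)
      simp only [hF]
      rw [mul_add] at h
      linarith [h]
  have hsum := Finset.sum_le_sum hedge
  rw [sum_lift_add_eq] at hsum
  -- evaluate ∑ v, deg v * F v
  have hval : ∀ v : V, (G.degree v : ℝ) * F v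
      = ((Δ : ℝ) ^ 2 - 6 * Δ + 3 + 6 / Δ) / 2 * (G.degree v : ℝ) + (4 * (Δ : ℝ) - 6) := by
    intro v
    have hdv : (G.degree v : ℝ) ≠ 0 := by
      have := hdeg1 v
      positivity
    simp only [hF]
    field_simp
  rw [Finset.sum_congr rfl (fun v _ => hval v)] at hsum
  rw [Finset.sum_add_distrib, ← Finset.mul_sum, Finset.sum_const, Finset.card_univ,
    hcard] at hsum
  have hdegsum : ∑ v : V, (G.degree v : ℝ) = 2 * ((n : ℝ) - 1) := by
    have h1 : (G.edgeFinset.card : ℕ) + 1 = n := by rw [hT.card_edgeFinset, hcard]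
    have h2 : ∑ v : V, G.degree v = 2 * G.edgeFinset.card :=
      G.sum_degrees_eq_twice_card_edges
    have h3 : ((∑ v : V, G.degree v : ℕ) : ℝ) = 2 * ((n : ℝ) - 1) := by
      rw [h2]
      push_cast
      have : (G.edgeFinset.card : ℝ) = (n : ℝ) - 1 := by
        have := h1
        push_cast [← this]
        ring
      rw [this]
    rw [← h3]
    push_cast
    ring
  rw [hdegsum] at hsum
  have : ((Δ:ℝ)^2 - 6*Δ + 3 + 6/Δ) / 2 * (2 * ((n:ℝ) - 1)) + (n:ℝ) * (4*(Δ:ℝ) - 6)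
      = (4 * (Δ : ℝ) - 6) * (n : ℝ)
        + ((Δ : ℝ) ^ 2 - 6 * (Δ : ℝ) + 3 + 6 / (Δ : ℝ)) * ((n : ℝ) - 1) := by ring
  rw [nsmul_eq_mul] at hsum
  linarith [hsum]
end

section
/- Let Δ ≥ 4 be an integer and define F(i,j) = (4Δ−6)(1/i + 1/j) + Δ² − 6Δ + 3 + 6/Δ − (i−j)². Then for every integer i with ⌊(Δ+3)/2⌋ + 1 ≤ i ≤ Δ−1, one has the strict inequality i·F(i,2) > F(Δ,Δ), where F(Δ,Δ) = 2(4Δ−6)/Δ + Δ² − 6Δ + 3 + 6/Δ. -/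
theorem F_self (Δ : ℕ) :
    F Δ Δ Δ = 2 * (4 * (Δ : ℝ) - 6) / (Δ : ℝ) + (Δ : ℝ) ^ 2 - 6 * (Δ : ℝ) + 3 + 6 / (Δ : ℝ) := by
  rw [F]
  ring

def slackGap (Δ i : ℝ) : ℝ :=
  -Δ * i ^ 3 + 4 * Δ * i ^ 2 + (Δ ^ 3 - 4 * Δ ^ 2 - 4 * Δ + 6) * i - Δ ^ 3 + 10 * Δ ^ 2 - 17 * Δ + 6

theorem cast_mul_sub_F_self_eq_slackGap {Δ i : ℕ} (hΔ : Δ ≠ 0) (hi : i ≠ 0) :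
    (Δ : ℝ) * (i * F Δ i 2 - F Δ Δ Δ) = slackGap Δ i := by
  rw [F, F, slackGap]
  field_simp
  ring

theorem slackGap_pos (a b : ℕ) : 0 < slackGap (a + 2 * b + 6) (a + b + 5) := by
  rw [slackGap]
  ring_nf
  positivity

theorem i_mul_F_i_two_gt_general (Δ : ℕ) (i : ℕ)
    (hit : (Δ + 3) / 2 + 1 ≤ i) (hiΔ : i ≤ Δ - 1) :
    (i : ℝ) * F Δ i 2 > F Δ Δ Δ
      ∧ F Δ Δ Δ = 2 * (4 * (Δ : ℝ) - 6) / (Δ : ℝ)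
          + (Δ : ℝ) ^ 2 - 6 * (Δ : ℝ) + 3 + 6 / (Δ : ℝ) := by
  refine ⟨?_, F_self Δ⟩
  obtain ⟨a, b, rfl, rfl⟩ : ∃ a b : ℕ, Δ = a + 2 * b + 6 ∧ i = a + b + 5 :=
    ⟨2 * i - Δ - 4, Δ - 1 - i, by omega, by omega⟩
  have hgap := cast_mul_sub_F_self_eq_slackGap (Δ := a + 2 * b + 6) (i := a + b + 5)
    (by omega) (by omega)
  have hprod := slackGap_pos a b
  push_cast at hgap ⊢
  rw [← hgap] at hprod
  exact sub_pos.mp (pos_of_mul_pos_right hprod (by positivity))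

/-- For `⌊(Δ+3)/2⌋ + 1 ≤ i ≤ Δ−1` one has `i·F(i,2) > F(Δ,Δ)`,
where `F(Δ,Δ) = 2(4Δ−6)/Δ + Δ² − 6Δ + 3 + 6/Δ`. -/
theorem i_mul_F_i_two_gt (Δ : ℕ) (hΔ : 4 ≤ Δ) (i : ℕ)
    (hit : (Δ + 3) / 2 + 1 ≤ i) (hiΔ : i ≤ Δ - 1) :
    (i : ℝ) * F Δ i 2 > F Δ Δ Δ
      ∧ F Δ Δ Δ = 2 * (4 * (Δ : ℝ) - 6) / (Δ : ℝ)
          + (Δ : ℝ) ^ 2 - 6 * (Δ : ℝ) + 3 + 6 / (Δ : ℝ) :=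
  i_mul_F_i_two_gt_general Δ i hit hiΔ
end

section
/- Let Δ ≥ 4 be an integer, let t = ⌊(Δ+3)/2⌋, and let T be a tree on n vertices with Δ dividing n. Assume every vertex of T has degree either in {1,2,…,t} or equal to Δ, and that no edge of T joins two vertices of degree Δ. Then the number of edges of T both of whose endpoints have degree at most t is at least Δ−1. -/
/-!
A vertex of degree above `t` has degree `Δ`, so the edges that are not low are exactly those
meeting the `k` vertices of degree `Δ`. These vertices form an independent set, so their
incidence sets are disjoint and there are exactly `k Δ` such edges. As `k Δ ≤ n - 1 < n` and
`Δ ∣ n`, in fact `k Δ ≤ n - Δ`, which leaves at least `Δ - 1` of the `n - 1` edges low.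
-/

open Finset

theorem Nat.mul_add_le_of_mul_lt_of_dvd {k d n : ℕ} (hd : d ∣ n) (h : k * d < n) :
    k * d + d ≤ n := by
  obtain ⟨m, rfl⟩ := hd
  have hkm : k < m := Nat.lt_of_mul_lt_mul_left (by rwa [Nat.mul_comm] at h)
  calc k * d + d = (k + 1) * d := (Nat.succ_mul k d).symm
    _ ≤ m * d := Nat.mul_le_mul_right d hkm
    _ = d * m := Nat.mul_comm m d

namespace SimpleGraph

variable {V : Type*} [Fintype V] [DecidableEq V] {G : SimpleGraph V} [DecidableRel G.Adj]

theorem filter_exists_mem_edgeFinset_eq_biUnion (s : Finset V) :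
    {e ∈ G.edgeFinset | ∃ v ∈ e, v ∈ s} = s.biUnion (G.incidenceFinset ·) := by
  ext e
  simp only [mem_filter, mem_biUnion, incidenceFinset_eq_filter]
  tauto

theorem card_biUnion_incidenceFinset_of_isIndepSet {s : Finset V} (hs : G.IsIndepSet s) :
    #(s.biUnion (G.incidenceFinset ·)) = ∑ v ∈ s, G.degree v := by
  rw [card_biUnion]
  · simp_rw [card_incidenceFinset_eq_degree]
  · intro u hu v hv huv
    rw [Function.onFun, ← disjoint_coe, coe_incidenceFinset, coe_incidenceFinset,
      Set.disjoint_iff_inter_eq_empty]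
    exact G.incidenceSet_inter_incidenceSet_of_not_adj (hs hu hv huv) huv

theorem sum_degree_le_card_edgeFinset_of_isIndepSet {s : Finset V} (hs : G.IsIndepSet s) :
    ∑ v ∈ s, G.degree v ≤ #G.edgeFinset := by
  rw [← card_biUnion_incidenceFinset_of_isIndepSet hs]
  exact card_le_card (biUnion_subset.2 fun v _ => G.incidenceFinset_subset v)

end SimpleGraph

open SimpleGraph

open scoped Classical in
theorem low_degree_edges_ge_general {V : Type*} [Fintype V]
    (G : SimpleGraph V) (hT : G.IsTree)
    (Δ : ℕ) (hdvd : Δ ∣ Fintype.card V)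
    (hdeg : ∀ v, (1 ≤ G.degree v ∧ G.degree v ≤ (Δ + 3) / 2) ∨ G.degree v = Δ)
    (hnoDD : ∀ u v, G.Adj u v → ¬(G.degree u = Δ ∧ G.degree v = Δ)) :
    Δ - 1 ≤
      (G.edgeFinset.filter
        (fun e => ∀ v ∈ e, G.degree v ≤ (Δ + 3) / 2)).card := by
  set high : Finset V := {v | (Δ + 3) / 2 < G.degree v}
  have degree_high : ∀ v ∈ high, G.degree v = Δ := fun v hv => by
    have := (mem_filter.1 hv).2
    rcases hdeg v with h | h <;> omega
  have high_indep : G.IsIndepSet high := fun u hu v hv _ huv =>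
    hnoDD u v huv ⟨degree_high u hu, degree_high v hv⟩
  have sum_degree_high : ∑ v ∈ high, G.degree v = #high * Δ := by
    rw [sum_congr rfl degree_high, sum_const, smul_eq_mul]
  have card_not_low :
      #{e ∈ G.edgeFinset | ¬ ∀ v ∈ e, G.degree v ≤ (Δ + 3) / 2} = #high * Δ := by
    rw [← sum_degree_high, ← card_biUnion_incidenceFinset_of_isIndepSet high_indep,
      ← filter_exists_mem_edgeFinset_eq_biUnion]
    simp [high]
  have card_edges := hT.card_edgeFinset
  have high_le_edges := sum_degree_high ▸
    sum_degree_le_card_edgeFinset_of_isIndepSet high_indep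
  have high_add_Δ_le := Nat.mul_add_le_of_mul_lt_of_dvd hdvd (by omega : #high * Δ < Fintype.card V)
  have card_split :=
    G.edgeFinset.card_filter_add_card_filter_not (fun e => ∀ v ∈ e, G.degree v ≤ (Δ + 3) / 2)
  omega

open scoped Classical in
/-- If `Δ ∣ n`, every vertex of the tree `T` has degree in `{1,…,t}` or equal
to `Δ` (where `t = ⌊(Δ+3)/2⌋`), and no edge joins two `Δ`-vertices, then at
least `Δ−1` edges have both endpoints of degree at most `t`. -/
theorem low_degree_edges_ge {V : Type*} [Fintype V]
    (G : SimpleGraph V) (hT : G.IsTree)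
    (Δ : ℕ) (hΔ : 4 ≤ Δ) (hdvd : Δ ∣ Fintype.card V)
    (hdeg : ∀ v, (1 ≤ G.degree v ∧ G.degree v ≤ (Δ + 3) / 2) ∨ G.degree v = Δ)
    (hnoDD : ∀ u v, G.Adj u v → ¬(G.degree u = Δ ∧ G.degree v = Δ)) :
    Δ - 1 ≤
      (G.edgeFinset.filter
        (fun e => ∀ v ∈ e, G.degree v ≤ (Δ + 3) / 2)).card :=
  low_degree_edges_ge_general G hT Δ hdvd hdeg hnoDD
end

section
/- Let Δ ≥ 4 be an integer and let T be a tree on n vertices with maximum degree exactly Δ, where Δ divides n. Then the penalty P(T) = Σ_{uv ∈ E(T)} F(d(u), d(v)) satisfies P(T) ≥ F(Δ,Δ) = 2(4Δ−6)/Δ + Δ² − 6Δ + 3 + 6/Δ; equivalently, σ(T) = Σ_{uv ∈ E(T)} (d(u) − d(v))² ≤ (4Δ−6)·n + (Δ²−6Δ+3+6/Δ)·(n−1) − F(Δ,Δ). -/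
/-!
On `[1, Δ]²` the dual slack `F` is nonnegative, so `P(T)` dominates the `F`-value of any single
edge and the `F`-sum over any star. Suppose `P(T) < F(Δ,Δ)`. Then no edge joins two vertices of
degree `Δ`, and no edge `ab` with `d(b) ≤ d(a) = i < Δ` exists either: for `i ≤ 2` the edge alone
weighs at least `F(Δ,Δ)`, and for `3 ≤ i` so does the star of `a`, because each of its other
`i - 1` edges weighs at least `min (F(i,2), F(i,Δ))`. So every edge has exactly one endpoint of
degree `Δ`, whence `n - 1 = |E| = Δ · #{v | d(v) = Δ}`, contradicting `Δ ∣ n`.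

The bound on `σ` is a restatement: `(d(u) - d(v))² = (4Δ-6)(1/d(u) + 1/d(v)) + (Δ²-6Δ+3+6/Δ) -
F(d(u), d(v))`, and `∑_{uv ∈ E} (1/d(u) + 1/d(v)) = n` by the weighted handshake lemma.
-/

open Finset

theorem F_comm (Δ i j : ℕ) : F Δ i j = F Δ j i := by
  simp only [F]; ring

theorem F_max_left_eq {Δ s : ℕ} (hΔ : Δ ≠ 0) (hs : s ≠ 0) :
    F Δ Δ s = ((s : ℝ) - 1) * ((s : ℝ) - 2) * (2 * Δ - 3 - s) / s := by
  simp only [F]; field_simp; ring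

theorem F_max_left_nonneg {Δ s : ℕ} (hΔ : 4 ≤ Δ) (hs : 1 ≤ s) (hsΔ : s ≤ Δ) :
    0 ≤ F Δ Δ s := by
  rw [F_max_left_eq (by omega) (by omega)]
  have hs' : (1 : ℝ) ≤ s := by exact_mod_cast hs
  have hsΔ' : (s : ℝ) ≤ Δ := by exact_mod_cast hsΔ
  have hΔ' : (4 : ℝ) ≤ Δ := by exact_mod_cast hΔ
  obtain rfl | hs2 := eq_or_lt_of_le hs
  · simp
  have hs2' : (2 : ℝ) ≤ s := by exact_mod_cast hs2
  have : 0 ≤ ((s : ℝ) - 1) * ((s : ℝ) - 2) * (2 * Δ - 3 - s) := by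
    apply mul_nonneg (mul_nonneg _ _) <;> linarith
  positivity

theorem F_max_left_le {Δ i j : ℕ} (hΔ : 4 ≤ Δ) (hj : 1 ≤ j) (hji : j ≤ i) (hiΔ : i ≤ Δ) :
    F Δ Δ (Δ - (i - j)) ≤ F Δ i j := by
  have hcast : ((Δ - (i - j) : ℕ) : ℝ) = Δ - (i - j) := by
    rw [Nat.cast_sub (by omega), Nat.cast_sub hji]
  have hΔ' : (4 : ℝ) ≤ Δ := by exact_mod_cast hΔ
  have hi : 1 / (Δ : ℝ) ≤ 1 / i :=
    one_div_le_one_div_of_le (by exact_mod_cast (by omega : 0 < i)) (by exact_mod_cast hiΔ)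
  have hj : 1 / ((Δ - (i - j) : ℕ) : ℝ) ≤ 1 / j :=
    one_div_le_one_div_of_le (by exact_mod_cast hj) (by exact_mod_cast (by omega : j ≤ Δ - (i - j)))
  have := mul_le_mul_of_nonneg_left (add_le_add hi hj) (by linarith : (0 : ℝ) ≤ 4 * Δ - 6)
  simp only [F]
  rw [hcast] at this ⊢
  linarith [show ((Δ : ℝ) - (Δ - (i - j))) ^ 2 = ((i : ℝ) - j) ^ 2 by ring]

theorem F_nonneg {Δ i j : ℕ} (hΔ : 4 ≤ Δ) (hi : 1 ≤ i) (hiΔ : i ≤ Δ) (hj : 1 ≤ j)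
    (hjΔ : j ≤ Δ) : 0 ≤ F Δ i j := by
  wlog hji : j ≤ i generalizing i j
  · rw [F_comm]; exact this hj hjΔ hi hiΔ (by omega)
  exact (F_max_left_nonneg hΔ (by omega) (by omega)).trans (F_max_left_le hΔ hj hji hiΔ)

theorem min_F_two_F_max_le {Δ i t : ℕ} (hΔ : 4 ≤ Δ) (hi : 1 ≤ i) (hiΔ : i ≤ Δ) (ht : 1 ≤ t)
    (htΔ : t ≤ Δ) : min (F Δ i 2) (F Δ i Δ) ≤ F Δ i t := by
  have hΔ' : (4 : ℝ) ≤ Δ := by exact_mod_cast hΔ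
  have hiΔ' : (i : ℝ) ≤ Δ := by exact_mod_cast hiΔ
  have ht' : (1 : ℝ) ≤ t := by exact_mod_cast ht
  have htΔ' : (t : ℝ) ≤ Δ := by exact_mod_cast htΔ
  obtain rfl | ht2 := eq_or_lt_of_le ht
  · have : F Δ i 1 - F Δ i 2 = 2 * (Δ - i) := by simp only [F]; push_cast; ring
    exact (min_le_left _ _).trans (by linarith)
  rcases le_or_gt (2 * i) (t + Δ) with hnear | hfar
  · -- `t` is at least as close to `i` as `Δ` is, and `1 / t ≥ 1 / Δ`
    refine (min_le_right _ _).trans ?_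
    have hnear' : 2 * (i : ℝ) ≤ t + Δ := by exact_mod_cast hnear
    have hinv := mul_le_mul_of_nonneg_left (one_div_le_one_div_of_le (by linarith) htΔ')
      (by linarith : (0 : ℝ) ≤ 4 * Δ - 6)
    have hsq : 0 ≤ ((Δ : ℝ) - t) * (Δ + t - 2 * i) := mul_nonneg (by linarith) (by linarith)
    simp only [F]
    nlinarith
  · refine (min_le_left _ _).trans ?_
    obtain rfl | ht3 := eq_or_lt_of_le (show 2 ≤ t by omega)
    · rfl
    have ht3' : (3 : ℝ) ≤ t := by exact_mod_cast ht3
    have hfar' : (t : ℝ) + Δ + 1 ≤ 2 * i := by exact_mod_cast hfar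
    have heq : F Δ i t - F Δ i 2
        = ((t : ℝ) - 2) * (2 * t * (2 * i - t - 2) - (4 * Δ - 6)) / (2 * t) := by
      simp only [F]; field_simp; ring
    have : 0 ≤ ((t : ℝ) - 2) * (2 * t * (2 * i - t - 2) - (4 * Δ - 6)) :=
      mul_nonneg (by linarith) (by nlinarith)
    rw [← sub_nonneg, heq]
    positivity

theorem F_max_max_le_of_le_two {Δ i j : ℕ} (hΔ : 4 ≤ Δ) (hj : 1 ≤ j) (hji : j ≤ i) (hi2 : i ≤ 2) :
    F Δ Δ Δ ≤ F Δ i j := by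
  obtain ⟨d, rfl⟩ := Nat.exists_eq_add_of_le' hΔ
  rw [← sub_nonneg]
  interval_cases i <;> interval_cases j <;>
  · simp only [F]; push_cast
    field_simp
    ring_nf
    positivity

theorem F_diag_sub_le {Δ i j : ℕ} (hΔ : 2 ≤ Δ) (hj : 1 ≤ j) (hji : j ≤ i) :
    F Δ i i - ((i : ℝ) - 1) ^ 2 ≤ F Δ i j := by
  have hj' : (1 : ℝ) ≤ j := by exact_mod_cast hj
  have hji' : (j : ℝ) ≤ i := by exact_mod_cast hji
  have hΔ' : (2 : ℝ) ≤ Δ := by exact_mod_cast hΔ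
  have := mul_le_mul_of_nonneg_left (one_div_le_one_div_of_le (by linarith) hji')
    (by linarith : (0 : ℝ) ≤ 4 * Δ - 6)
  simp only [F]
  nlinarith

theorem F_max_max_le_of_three_le {Δ i : ℕ} (h3 : 3 ≤ i) (hiΔ : i < Δ) :
    F Δ Δ Δ ≤ F Δ i i - ((i : ℝ) - 1) ^ 2 + ((i : ℝ) - 1) * min (F Δ i 2) (F Δ i Δ) := by
  obtain ⟨a, rfl⟩ := Nat.exists_eq_add_of_le' h3
  obtain ⟨d, rfl⟩ := Nat.exists_eq_add_of_lt hiΔ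
  -- with `i = a + 3` and `Δ = i + d + 1`, the cleared numerator has nonnegative coefficients
  rcases min_choice (F (a + 3 + d + 1) (a + 3) 2) (F (a + 3 + d + 1) (a + 3) (a + 3 + d + 1))
    with hk | hk <;> rw [hk, ← sub_nonneg] <;>
  · simp only [F]; push_cast
    field_simp
    ring_nf
    positivity

theorem F_max_max_le_star {Δ i j : ℕ} (hΔ : 4 ≤ Δ) (hj : 1 ≤ j) (hji : j ≤ i) (hiΔ : i < Δ) :
    F Δ Δ Δ ≤ F Δ i j + ((i : ℝ) - 1) * min (F Δ i 2) (F Δ i Δ) := by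
  rcases le_or_gt i 2 with hi2 | hi3
  · have hmin : 0 ≤ min (F Δ i 2) (F Δ i Δ) :=
      le_min (F_nonneg hΔ (by omega) hiΔ.le (by omega) (by omega))
        (F_nonneg hΔ (by omega) hiΔ.le (by omega) le_rfl)
    have hi1 : (1 : ℝ) ≤ i := by exact_mod_cast (show 1 ≤ i by omega)
    nlinarith [F_max_max_le_of_le_two hΔ hj hji hi2]
  · linarith [F_diag_sub_le (by omega : 2 ≤ Δ) hj hji, F_max_max_le_of_three_le hi3 hiΔ]

namespace SimpleGraph

variable {V : Type*} [Fintype V] (G : SimpleGraph V) [DecidableRel G.Adj]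

theorem sum_edgeFinset_lift_add {M : Type*} [AddCommMonoid M] (f : V → M) :
    ∑ e ∈ G.edgeFinset, Sym2.lift ⟨fun u v => f u + f v, fun _ _ => add_comm _ _⟩ e
      = ∑ v, G.degree v • f v := by
  classical
  have hedge : ∀ e ∈ G.edgeFinset, Sym2.lift ⟨fun u v => f u + f v, fun _ _ => add_comm _ _⟩ e
      = ∑ v, if v ∈ e then f v else 0 := by
    intro e he
    induction e using Sym2.ind with
    | _ a b =>
      rw [← sum_filter, Sym2.lift_mk,
        show univ.filter (· ∈ s(a, b)) = {a, b} by ext; simp [Sym2.mem_iff],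
        sum_pair (G.ne_of_adj (G.mem_edgeFinset.mp he))]
  rw [sum_congr rfl hedge, sum_comm]
  refine sum_congr rfl fun v _ => ?_
  rw [← sum_filter, sum_const, ← incidenceFinset_eq_filter, card_incidenceFinset_eq_degree]

theorem sum_neighborFinset_le_sum_edgeFinset {φ : V → V → ℝ} (hφ : ∀ a b, φ a b = φ b a)
    (hφ₀ : ∀ a b, G.Adj a b → 0 ≤ φ a b) (a : V) :
    ∑ w ∈ G.neighborFinset a, φ a w ≤ ∑ e ∈ G.edgeFinset, Sym2.lift ⟨φ, hφ⟩ e := by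
  classical
  have hinj : Set.InjOn (s(a, ·)) (G.neighborFinset a) := fun _ _ _ _ h => Sym2.congr_right.mp h
  calc ∑ w ∈ G.neighborFinset a, φ a w
      = ∑ e ∈ (G.neighborFinset a).image (s(a, ·)), Sym2.lift ⟨φ, hφ⟩ e := by
        rw [sum_image hinj]; simp only [Sym2.lift_mk]
    _ ≤ ∑ e ∈ G.edgeFinset, Sym2.lift ⟨φ, hφ⟩ e := by
        refine sum_le_sum_of_subset_of_nonneg (fun e he => ?_) fun e he _ => ?_
        · obtain ⟨w, hw, rfl⟩ := mem_image.mp he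
          simpa using hw
        · induction e using Sym2.ind with
          | _ u v => exact hφ₀ u v (G.mem_edgeFinset.mp he)

theorem add_mul_le_sum_neighborFinset {φ : V → ℝ} {m : ℝ} {a b : V}
    (hm : ∀ w ∈ G.neighborFinset a, m ≤ φ w) (hab : G.Adj a b) :
    φ b + ((G.degree a : ℝ) - 1) * m ≤ ∑ w ∈ G.neighborFinset a, φ w := by
  classical
  have hb : b ∈ G.neighborFinset a := (G.mem_neighborFinset a b).mpr hab
  have hrest := card_nsmul_le_sum ((G.neighborFinset a).erase b) φ m
    fun w hw => hm w (mem_of_mem_erase hw)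
  rw [card_erase_of_mem hb, card_neighborFinset_eq_degree, nsmul_eq_mul,
    Nat.cast_sub (G.degree_pos_iff_exists_adj a |>.mpr ⟨b, hab⟩)] at hrest
  rw [← add_sum_erase _ _ hb]
  push_cast at hrest
  linarith

theorem dvd_card_edgeFinset_of_adj {k : ℕ}
    (h : ∀ a b, G.Adj a b → (G.degree a = k ↔ G.degree b ≠ k)) : k ∣ #G.edgeFinset := by
  classical
  have hbip : G.IsBipartiteWith ↑(univ.filter (G.degree · = k)) ↑(univ.filter (G.degree · ≠ k)) :=
    { disjoint := by
        rw [disjoint_coe]; exact disjoint_filter_filter_not _ _ _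
      mem_of_adj := fun a b hab => by
        simp only [coe_filter, mem_univ, true_and, Set.mem_ofPred_eq]
        have := h a b hab
        tauto }
  rw [← isBipartiteWith_sum_degrees_eq_card_edges hbip,
    sum_congr rfl fun v hv => (mem_filter.mp hv).2]
  exact dvd_sum fun _ _ => dvd_refl k

noncomputable def penalty (Δ : ℕ) : ℝ :=
  ∑ e ∈ G.edgeFinset,
    Sym2.lift ⟨fun u v => F Δ (G.degree u) (G.degree v), fun _ _ => F_comm _ _ _⟩ e

noncomputable def sigmaIrregularity : ℝ :=
  ∑ e ∈ G.edgeFinset,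
    Sym2.lift ⟨fun u v => ((G.degree u : ℝ) - G.degree v) ^ 2, fun _ _ => by ring⟩ e

theorem F_max_max_le_penalty {Δ : ℕ} (hΔ : 4 ≤ Δ) (hdeg : ∀ v, 1 ≤ G.degree v)
    (hmax : ∀ v, G.degree v ≤ Δ) (hE : ¬ Δ ∣ #G.edgeFinset) : F Δ Δ Δ ≤ G.penalty Δ := by
  have hF₀ : ∀ a b, 0 ≤ F Δ (G.degree a) (G.degree b) := fun a b =>
    F_nonneg hΔ (hdeg a) (hmax a) (hdeg b) (hmax b)
  have hstar : ∀ a, ∑ w ∈ G.neighborFinset a, F Δ (G.degree a) (G.degree w) ≤ G.penalty Δ :=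
    G.sum_neighborFinset_le_sum_edgeFinset _ fun a b _ => hF₀ a b
  have hedge : ∀ a b, G.Adj a b → F Δ (G.degree a) (G.degree b) ≤ G.penalty Δ := fun a b hab =>
    (single_le_sum (fun w _ => hF₀ a w) ((G.mem_neighborFinset a b).mpr hab)).trans (hstar a)
  have hlow : ∀ a b, G.Adj a b → G.degree b ≤ G.degree a → G.degree a < Δ →
      F Δ Δ Δ ≤ G.penalty Δ := fun a b hab hba ha =>
    calc F Δ Δ Δ
        ≤ F Δ (G.degree a) (G.degree b) + ((G.degree a : ℝ) - 1) *
            min (F Δ (G.degree a) 2) (F Δ (G.degree a) Δ) :=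
          F_max_max_le_star hΔ (hdeg b) hba ha
      _ ≤ ∑ w ∈ G.neighborFinset a, F Δ (G.degree a) (G.degree w) :=
          G.add_mul_le_sum_neighborFinset
            (fun w _ => min_F_two_F_max_le hΔ (hdeg a) (hmax a) (hdeg w) (hmax w)) hab
      _ ≤ G.penalty Δ := hstar a
  by_contra! hlt
  refine hE (G.dvd_card_edgeFinset_of_adj fun a b hab => ⟨fun ha hb => ?_, fun hb => ?_⟩)
  · have := hedge a b hab
    rw [ha, hb] at this
    linarith
  · by_contra ha
    rcases le_total (G.degree b) (G.degree a) with hba | hab'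
    · linarith [hlow a b hab hba (lt_of_le_of_ne (hmax a) ha)]
    · linarith [hlow b a hab.symm hab' (lt_of_le_of_ne (hmax b) hb)]

theorem sigmaIrregularity_eq (hdeg : ∀ v, 1 ≤ G.degree v) (Δ : ℕ) :
    G.sigmaIrregularity = (4 * Δ - 6) * Fintype.card V
      + ((Δ : ℝ) ^ 2 - 6 * Δ + 3 + 6 / Δ) * #G.edgeFinset - G.penalty Δ := by
  have hinv : ∑ e ∈ G.edgeFinset, Sym2.lift ⟨fun u v => 1 / (G.degree u : ℝ) + 1 / G.degree v,
      fun _ _ => add_comm _ _⟩ e = Fintype.card V := by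
    rw [G.sum_edgeFinset_lift_add, Fintype.card_eq_sum_ones, Nat.cast_sum]
    refine sum_congr rfl fun v _ => ?_
    have : (G.degree v : ℝ) ≠ 0 := by exact_mod_cast Nat.one_le_iff_ne_zero.mp (hdeg v)
    rw [nsmul_eq_mul, mul_one_div_cancel this, Nat.cast_one]
  rw [sigmaIrregularity, penalty, ← hinv, mul_sum, mul_comm _ (#G.edgeFinset : ℝ),
    ← nsmul_eq_mul, ← sum_const, ← sum_add_distrib, ← sum_sub_distrib]
  refine sum_congr rfl fun e _ => ?_
  induction e using Sym2.ind with
  | _ u v => simp only [Sym2.lift_mk, F]; ring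

end SimpleGraph

/-- If `Δ ∣ n` and `T` is a tree of order `n` with maximum degree exactly `Δ`,
then the penalty satisfies `P(T) ≥ F(Δ,Δ)`, and equivalently
`σ(T) ≤ (4Δ−6)n + (Δ²−6Δ+3+6/Δ)(n−1) − F(Δ,Δ)`. -/
theorem penalty_ge_F_DeltaDelta {V : Type*} [Fintype V]
    (G : SimpleGraph V) [DecidableRel G.Adj] (hT : G.IsTree)
    (Δ n : ℕ) (hΔ : 4 ≤ Δ) (hcard : Fintype.card V = n) (hdvd : Δ ∣ n)
    (hmax : ∀ v, G.degree v ≤ Δ) (hex : ∃ v, G.degree v = Δ) :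
    F Δ Δ Δ ≤
        ∑ e ∈ G.edgeFinset,
          Sym2.lift ⟨fun u v => F Δ (G.degree u) (G.degree v),
            by intro a b; simp only [F]; ring⟩ e
      ∧ F Δ Δ Δ = 2 * (4 * (Δ : ℝ) - 6) / (Δ : ℝ)
          + (Δ : ℝ) ^ 2 - 6 * (Δ : ℝ) + 3 + 6 / (Δ : ℝ)
      ∧ ∑ e ∈ G.edgeFinset,
            Sym2.lift ⟨fun u v => ((G.degree u : ℝ) - (G.degree v : ℝ)) ^ 2,
              by intro a b; ring⟩ e
          ≤ (4 * (Δ : ℝ) - 6) * (n : ℝ)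
            + ((Δ : ℝ) ^ 2 - 6 * (Δ : ℝ) + 3 + 6 / (Δ : ℝ)) * ((n : ℝ) - 1)
            - F Δ Δ Δ := by
  obtain ⟨v₀, hv₀⟩ := hex
  obtain ⟨w₀, hw₀⟩ := G.degree_pos_iff_exists_adj v₀ |>.mp (by omega)
  have : Nontrivial V := nontrivial_of_ne v₀ w₀ hw₀.ne
  have hdeg : ∀ v, 1 ≤ G.degree v := fun v => hT.connected.preconnected.degree_pos_of_nontrivial v
  have hedges : #G.edgeFinset + 1 = n := hcard ▸ hT.card_edgeFinset
  have hE : ¬ Δ ∣ #G.edgeFinset := fun h =>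
    absurd (Nat.le_of_dvd one_pos ((Nat.dvd_add_right h).mp (hedges ▸ hdvd))) (by omega)
  have hP : F Δ Δ Δ ≤ G.penalty Δ := G.F_max_max_le_penalty hΔ hdeg hmax hE
  refine ⟨hP, by simp only [F]; ring, ?_⟩
  have hn : (n : ℝ) = #G.edgeFinset + 1 := by exact_mod_cast hedges.symm
  refine (G.sigmaIrregularity_eq hdeg Δ).le.trans ?_
  rw [hcard, hn]
  linarith
end
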